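/- arXiv:1907.09353 — 3 statements merged into one kernel-verified Lean document; each statement's English description precedes it below -/
import Mathlib

section
/- Let G = SL(2,ℝ) and let θ = Int(M) be conjugation by the matrix M = [[0,1],[1,0]]. There is no h ∈ SL(2,ℝ) fixed by θ (i.e. with M h M⁻¹ = h) such that h·diag(t, t⁻¹)·h⁻¹ = diag(t⁻¹, t) for all t ∈ ℝ, t ≠ 0. (Equivalently, the nontrivial element of the Weyl group of the diagonal torus has no representative in the real fixed point group H_ℝ = {[[a,b],[b,a]] | a² − b² = 1}.) -/
open Matrix

/-- In `SL(2,ℝ)` with `θ = Int([[0,1],[1,0]])`, there is no `θ`-fixed element `h` of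
`SL(2,ℝ)` conjugating `diag(t, t⁻¹)` to `diag(t⁻¹, t)` for all nonzero real `t`:
the nontrivial Weyl group element of the diagonal torus has no representative in the
real fixed point group of `θ`. -/
theorem no_weyl_representative_in_real_fixed_group :
    ¬ ∃ h : Matrix (Fin 2) (Fin 2) ℝ, h.det = 1 ∧
      (!![0, 1; 1, 0] : Matrix (Fin 2) (Fin 2) ℝ) * h * (!![0, 1; 1, 0])⁻¹ = h ∧
      ∀ t : ℝ, t ≠ 0 →
        h * !![t, 0; 0, t⁻¹] * h⁻¹ = !![t⁻¹, 0; 0, t] := by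
  rintro ⟨h, hdet, hfix, hconj⟩
  have hinv : h⁻¹ * h = 1 := Matrix.nonsing_inv_mul h (by rw [hdet]; norm_num)
  have h2 := hconj 2 (by norm_num)
  have h2' : h * !![(2:ℝ), 0; 0, 2⁻¹] = !![(2:ℝ)⁻¹, 0; 0, 2] * h := by
    have := congrArg (fun X => X * h) h2
    simpa [Matrix.mul_assoc, hinv] using this
  rw [Matrix.eta_fin_two h] at h2' hfix
  rw [Matrix.eta_fin_two h, Matrix.det_fin_two_of] at hdet
  have hMinv : (!![(0:ℝ), 1; 1, 0])⁻¹ = !![(0:ℝ), 1; 1, 0] := by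
    rw [Matrix.inv_def]
    norm_num [Matrix.adjugate_fin_two, Matrix.det_fin_two_of]
  rw [hMinv] at hfix
  simp only [Matrix.mul_fin_two, ← Matrix.ext_iff, Fin.forall_fin_two, Matrix.of_apply,
    Matrix.cons_val', Matrix.cons_val_zero, Matrix.cons_val_one, Matrix.head_cons,
    Matrix.head_fin_const, Matrix.empty_val', Matrix.cons_val_fin_one] at h2' hfix
  obtain ⟨⟨e1, e2⟩, e3, e4⟩ := h2'
  obtain ⟨⟨f1, f2⟩, f3, f4⟩ := hfix
  have ha : h 0 0 = 0 := by linarith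
  have hd : h 1 1 = 0 := by linarith
  have hb : h 1 0 = h 0 1 := by linarith
  rw [ha, hd, hb] at hdet
  nlinarith [sq_nonneg (h 0 1)]
end

section
/- Let k be a field, x ∈ k, and m ≥ 1. Let L = [[0,1],[x,0]] and let L_{2m,x} ∈ M_{2m}(k) be the block diagonal matrix diag(L, L, …, L) with m copies of L. View a matrix g ∈ M_{2m}(k) as an m×m array of 2×2 blocks g_{ij}. Then L_{2m,x}·g = g·L_{2m,x} if and only if for all i, j there exist a, b ∈ k such that g_{ij} = [[a, b],[x·b, a]]. -/
open Matrix

theorem mul_blockL_entry {k : Type*} [Field k] (x : k) (m : ℕ)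
    (g : Matrix (Fin 2 × Fin m) (Fin 2 × Fin m) k) (p q : Fin 2) (i j : Fin m) :
    (blockDiagonal (fun _ : Fin m => (!![0, 1; x, 0] : Matrix (Fin 2) (Fin 2) k)) * g)
      (p, i) (q, j) = !![0, 1; x, 0] p 0 * g (0, i) (q, j) +
        !![0, 1; x, 0] p 1 * g (1, i) (q, j) := by
  simp [Matrix.mul_apply, blockDiagonal_apply, Fintype.sum_prod_type, Fin.sum_univ_two,
    Finset.sum_ite_eq]

theorem blockL_mul_entry {k : Type*} [Field k] (x : k) (m : ℕ)
    (g : Matrix (Fin 2 × Fin m) (Fin 2 × Fin m) k) (p q : Fin 2) (i j : Fin m) :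
    (g * blockDiagonal (fun _ : Fin m => (!![0, 1; x, 0] : Matrix (Fin 2) (Fin 2) k)))
      (p, i) (q, j) = g (p, i) (0, j) * !![0, 1; x, 0] 0 q +
        g (p, i) (1, j) * !![0, 1; x, 0] 1 q := by
  simp [Matrix.mul_apply, blockDiagonal_apply, Fintype.sum_prod_type, Fin.sum_univ_two,
    Finset.sum_ite_eq]

/-- Let `L_{2m,x}` be the block diagonal matrix with `m` diagonal blocks equal to
`L = [[0,1],[x,0]]`, acting on `2m`-dimensional space indexed by `Fin 2 × Fin m`
(viewing a `2m × 2m` matrix as an `m × m` array of `2 × 2` blocks).  A matrix `g`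
commutes with `L_{2m,x}` iff each `2 × 2` block of `g` has the form `[[a,b],[x·b,a]]`. -/
theorem commutes_with_block_L_iff {k : Type*} [Field k] (x : k) (m : ℕ) (hm : 1 ≤ m)
    (g : Matrix (Fin 2 × Fin m) (Fin 2 × Fin m) k) :
    blockDiagonal (fun _ : Fin m => (!![0, 1; x, 0] : Matrix (Fin 2) (Fin 2) k)) * g =
        g * blockDiagonal (fun _ : Fin m => (!![0, 1; x, 0] : Matrix (Fin 2) (Fin 2) k)) ↔
      ∀ i j : Fin m, ∃ a b : k,
        g (0, i) (0, j) = a ∧ g (0, i) (1, j) = b ∧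
        g (1, i) (0, j) = x * b ∧ g (1, i) (1, j) = a := by
  constructor
  · intro h i j
    refine ⟨g (0, i) (0, j), g (0, i) (1, j), rfl, rfl, ?_, ?_⟩
    · have := congrFun (congrFun h (0, i)) (0, j)
      rw [mul_blockL_entry, blockL_mul_entry] at this
      simpa [mul_comm] using this
    · have := congrFun (congrFun h (0, i)) (1, j)
      rw [mul_blockL_entry, blockL_mul_entry] at this
      simpa using this
  · intro h
    ext ⟨p, i⟩ ⟨q, j⟩
    obtain ⟨a, b, h1, h2, h3, h4⟩ := h i j
    rw [mul_blockL_entry, blockL_mul_entry]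
    fin_cases p <;> fin_cases q <;> simp [h1, h2, h3, h4, mul_comm]
end

section
/- Let k be an infinite field, x ∈ k, and m ≥ 1. Let L_{2m,x} ∈ M_{2m}(k) be the block diagonal matrix with m diagonal blocks equal to L = [[0,1],[x,0]]. Suppose g ∈ M_{2m}(k) commutes with L_{2m,x} and also commutes with every matrix of the form diag(a₁, a₁, a₂, a₂, …, a_m, a_m) where a₁, …, a_m ∈ k are nonzero and a₁²·a₂²⋯a_m² = 1. Then g is block diagonal: viewing g as an m×m array of 2×2 blocks g_{ij}, one has g_{ij} = 0 for i ≠ j, and for each i there exist a_i, b_i ∈ k with g_{ii} = [[a_i, b_i],[x·b_i, a_i]]. -/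
open Matrix

/-- Over an infinite field `k`, if `g` commutes with the block diagonal matrix `L_{2m,x}`
(with `m` diagonal `2 × 2` blocks `[[0,1],[x,0]]`, indexing `2m`-dimensional space by
`Fin 2 × Fin m`) and with every diagonal matrix `diag(a₁,a₁,…,a_m,a_m)` where all `aᵢ ≠ 0`
and `∏ aᵢ² = 1`, then `g` is block diagonal with diagonal blocks of the form
`[[a,b],[x·b,a]]`. -/
theorem centralizer_of_L_and_split_torus {k : Type*} [Field k] [Infinite k]
    (x : k) (m : ℕ) (hm : 1 ≤ m)
    (g : Matrix (Fin 2 × Fin m) (Fin 2 × Fin m) k)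
    (hL : blockDiagonal (fun _ : Fin m => (!![0, 1; x, 0] : Matrix (Fin 2) (Fin 2) k)) * g =
      g * blockDiagonal (fun _ : Fin m => (!![0, 1; x, 0] : Matrix (Fin 2) (Fin 2) k)))
    (hdiag : ∀ a : Fin m → k, (∀ i, a i ≠ 0) → (∏ i, (a i) ^ 2 = 1) →
      g * diagonal (fun p : Fin 2 × Fin m => a p.2) =
        diagonal (fun p : Fin 2 × Fin m => a p.2) * g) :
    (∀ i j : Fin m, i ≠ j → ∀ u v : Fin 2, g (u, i) (v, j) = 0) ∧
    ∀ i : Fin m, ∃ a b : k,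
      g (0, i) (0, i) = a ∧ g (0, i) (1, i) = b ∧
      g (1, i) (0, i) = x * b ∧ g (1, i) (1, i) = a := by
  classical
  constructor
  · intro i j hij u v
    obtain ⟨t, ht⟩ := Infinite.exists_notMem_finset ({0, 1, -1} : Finset k)
    simp only [Finset.mem_insert, Finset.mem_singleton, not_or] at ht
    obtain ⟨ht0, ht1, htm1⟩ := ht
    set a : Fin m → k := fun l => if l = i then t else if l = j then t⁻¹ else 1 with ha
    have hai : a i = t := by simp [ha]
    have haj : a j = t⁻¹ := by simp [ha, hij.symm]
    have hane : ∀ l, a l ≠ 0 := by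
      intro l; simp only [ha]
      split
      · exact ht0
      · split
        · exact inv_ne_zero ht0
        · exact one_ne_zero
    have hprod : ∏ l, (a l) ^ 2 = 1 := by
      rw [← Finset.mul_prod_erase Finset.univ _ (Finset.mem_univ i),
          ← Finset.mul_prod_erase _ _ (Finset.mem_erase.2 ⟨hij.symm, Finset.mem_univ j⟩)]
      rw [Finset.prod_eq_one]
      · rw [hai, haj]
        field_simp
      · intro l hl
        simp only [Finset.mem_erase] at hl
        simp [ha, hl.1, hl.2.1]
    have h := Matrix.ext_iff.mpr (hdiag a hane hprod) (u, i) (v, j)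
    rw [Matrix.mul_diagonal, Matrix.diagonal_mul] at h
    simp only [hai, haj] at h
    have hne : t⁻¹ ≠ t := by
      intro he
      rcases mul_self_eq_one_iff.1 (by field_simp at he; linear_combination -he) with h1 | h1
      · exact ht1 h1
      · exact htm1 h1
    by_contra hg
    exact hne (mul_left_cancel₀ hg (by linear_combination h))
  · intro i
    refine ⟨g (0, i) (0, i), g (0, i) (1, i), rfl, rfl, ?_, ?_⟩
    · have h := Matrix.ext_iff.mpr hL (0, i) (0, i)
      simp [Matrix.mul_apply, Fintype.sum_prod_type, Matrix.blockDiagonal_apply,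
        Fin.sum_univ_two, Finset.sum_ite_eq, Finset.sum_ite_eq'] at h
      linear_combination h
    · have h := Matrix.ext_iff.mpr hL (0, i) (1, i)
      simp [Matrix.mul_apply, Fintype.sum_prod_type, Matrix.blockDiagonal_apply,
        Fin.sum_univ_two, Finset.sum_ite_eq, Finset.sum_ite_eq'] at h
      linear_combination h
end
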